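/- arXiv:2407.10313 — 2 statements merged into one kernel-verified Lean document; each statement's English description precedes it below -/
import Mathlib

section
/- Let d ≥ 1 be an integer, Ω ⊆ ℝ^d a compact set, and X = {x_1,…,x_s} ⊆ [-1/2,1/2)^d a set of s distinct points, and suppose σ_min(Φ_{Ω,X}) > 0. Then for every w ∈ ℂ^s there exists f ∈ P(Ω) such that f(x_k) = w_k for all k ∈ {1,…,s}, ‖f‖_{L²(𝕋^d)} ≤ |w|₂ / σ_min(Φ_{Ω,X}), and ‖f‖_{L^∞(𝕋^d)} ≤ √(|Ω|_*) · |w|₂ / σ_min(Φ_{Ω,X}), where |Ω|_* = #(Ω ∩ ℤ^d). -/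
open MeasureTheory Finset
open scoped ENNReal Classical BigOperators

noncomputable section

namespace NF

variable {d : ℕ} {ι : Type*} [Fintype ι]

/-- ℓ^p norm on ℝ^d for p ∈ [1,∞] (encoded in ℝ≥0∞). -/
def lpnorm (p : ℝ≥0∞) (x : Fin d → ℝ) : ℝ :=
  if p = ∞ then ⨆ i, |x i| else (∑ i, |x i| ^ p.toReal) ^ (1 / p.toReal)

/-- the closed ℓ^p ball Ω_m^p. -/
def lpBall (d : ℕ) (p : ℝ≥0∞) (m : ℝ) : Set (Fin d → ℝ) := {x | lpnorm p x ≤ m}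

def dotR (ω x : Fin d → ℝ) : ℝ := ∑ i, ω i * x i

def l2norm (u : ι → ℂ) : ℝ := Real.sqrt (∑ k, ‖u k‖ ^ 2)

/-- the nonharmonic Fourier transform of u, as a function of ω. -/
def Fop (x : ι → Fin d → ℝ) (u : ι → ℂ) (ω : Fin d → ℝ) : ℂ :=
  ∑ k, u k * Complex.exp (-(2 * Real.pi * Complex.I) * (dotR ω (x k) : ℝ))

/-- its L²(Ω) norm -/
def FopNorm (Ω : Set (Fin d → ℝ)) (x : ι → Fin d → ℝ) (u : ι → ℂ) : ℝ :=
  Real.sqrt (∫ ω in Ω, ‖Fop x u ω‖ ^ 2)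

def sigmaMinF (Ω : Set (Fin d → ℝ)) (x : ι → Fin d → ℝ) : ℝ :=
  ⨅ u : {u : ι → ℂ // l2norm u = 1}, FopNorm Ω x u

def sigmaMaxF (Ω : Set (Fin d → ℝ)) (x : ι → Fin d → ℝ) : ℝ :=
  ⨆ u : {u : ι → ℂ // l2norm u = 1}, FopNorm Ω x u

def intPt (ω : Fin d → ℤ) : Fin d → ℝ := fun i => (ω i : ℝ)

/-- squared ℓ² norm of Φ_{Ω,X} u, summing over integer points of Ω. -/
def PhiSq (Ω : Set (Fin d → ℝ)) (x : ι → Fin d → ℝ) (u : ι → ℂ) : ℝ :=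
  ∑' ω : Fin d → ℤ, if intPt ω ∈ Ω then ‖Fop x u (intPt ω)‖ ^ 2 else 0

def PhiNorm (Ω : Set (Fin d → ℝ)) (x : ι → Fin d → ℝ) (u : ι → ℂ) : ℝ :=
  Real.sqrt (PhiSq Ω x u)

def sigmaMinPhi (Ω : Set (Fin d → ℝ)) (x : ι → Fin d → ℝ) : ℝ :=
  ⨅ u : {u : ι → ℂ // l2norm u = 1}, PhiNorm Ω x u

def sigmaMaxPhi (Ω : Set (Fin d → ℝ)) (x : ι → Fin d → ℝ) : ℝ :=
  ⨆ u : {u : ι → ℂ // l2norm u = 1}, PhiNorm Ω x u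

/-- torus ℓ^p distance. -/
def torusDist (p : ℝ≥0∞) (x y : Fin d → ℝ) : ℝ :=
  ⨅ n : Fin d → ℤ, lpnorm p (fun i => x i - y i + (n i : ℝ))

/-- fundamental domain [-1/2,1/2)^d of the torus. -/
def cube (d : ℕ) : Set (Fin d → ℝ) := Set.univ.pi fun _ => Set.Ico (-(1:ℝ)/2) (1/2)

def torusL2 (f : (Fin d → ℝ) → ℂ) : ℝ := Real.sqrt (∫ x in cube d, ‖f x‖ ^ 2)

def fullL2 (f : (Fin d → ℝ) → ℂ) : ℝ := Real.sqrt (∫ x, ‖f x‖ ^ 2)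

/-- membership in the Paley–Wiener space W(Ω). -/
def IsBandlimited (Ω : Set (Fin d → ℝ)) (f : (Fin d → ℝ) → ℂ) : Prop :=
  ∃ F : (Fin d → ℝ) → ℂ, MemLp F 2 (volume.restrict Ω) ∧
    ∀ x, f x = ∫ ω in Ω, F ω * Complex.exp ((2 * Real.pi * Complex.I) * (dotR ω x : ℝ))

/-- membership in P(Ω): trigonometric polynomials with frequencies in Ω ∩ ℤ^d. -/
def IsTrigPoly (Ω : Set (Fin d → ℝ)) (f : (Fin d → ℝ) → ℂ) : Prop :=
  ∃ c : (Fin d → ℤ) → ℂ, (Function.support c).Finite ∧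
    (∀ ω, c ω ≠ 0 → intPt ω ∈ Ω) ∧
    ∀ x, f x = ∑' ω : Fin d → ℤ, c ω * Complex.exp ((2 * Real.pi * Complex.I) * (dotR (intPt ω) x : ℝ))

/-- |Ω|_* = #(Ω ∩ ℤ^d). -/
def intCard (Ω : Set (Fin d → ℝ)) : ℕ := Set.ncard {ω : Fin d → ℤ | intPt ω ∈ Ω}

/-- τ local sparsity ν_p(τ,X) for an indexed family. -/
def localSparsity (p : ℝ≥0∞) (τ : ℝ) (x : ι → Fin d → ℝ) : ℕ :=
  Finset.univ.sup fun k => (Finset.univ.filter fun j => torusDist p (x j) (x k) ≤ τ).card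

/-- τ local sparsity ν_p(τ,X) for a finite set. -/
def finsetSparsity (p : ℝ≥0∞) (τ : ℝ) (X : Finset (Fin d → ℝ)) : ℕ :=
  X.sup fun x => (X.filter fun y => torusDist p y x ≤ τ).card

/-- minimum torus ℓ^p separation of a finite set. -/
def finsetSep (p : ℝ≥0∞) (X : Finset (Fin d → ℝ)) : ℝ :=
  sInf {r | ∃ x ∈ X, ∃ y ∈ X, x ≠ y ∧ torusDist p x y = r}

/-- Fourier transform of a real-valued function on ℝ^d. -/
def FT (f : (Fin d → ℝ) → ℝ) (ξ : Fin d → ℝ) : ℂ :=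
  ∫ x, (f x : ℂ) * Complex.exp (-(2 * Real.pi * Complex.I) * (dotR ξ x : ℝ))


/-- X consists of clumps with parameters (p,τ,λ) in the torus ℓ^p metric. -/
def ConsistsOfClumps (p : ℝ≥0∞) (τ : ℝ) (lam : ℕ) (X : Finset (Fin d → ℝ)) : Prop :=
  ∃ r : ℕ, 0 < r ∧ ∃ C : Fin r → Finset (Fin d → ℝ),
    (∀ k, (C k).card = lam) ∧
    (∀ k l, k ≠ l → Disjoint (C k) (C l)) ∧
    Finset.univ.biUnion C = X ∧
    (∀ k, ∀ x ∈ C k, ∀ y ∈ C k, torusDist p x y ≤ τ) ∧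
    (1 < r → ∀ k l, k ≠ l → ∀ x ∈ C k, ∀ y ∈ C l, τ < torusDist p x y)

/-!
Let `T = Ω ∩ ℤ^d`, finite because `Ω` is compact, and `Φ = Φ_{Ω,X}`. The trigonometric polynomial
`f = ∑_{ω ∈ T} c_ω e^{2πi ω·y}` satisfies `f(x_k) = (Φ* c)_k`, `‖f‖_{L²} = |c|₂` by orthonormality
of the exponentials on the cube, and `‖f‖_∞ ≤ √|T| |c|₂` by Cauchy–Schwarz. Hence it suffices to
solve `Φ* c = w` with `|c|₂ ≤ |w|₂ / σ_min`, and the least-norm solution `c = Φ (Φ* Φ)⁻¹ w` does.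
-/

open scoped ComplexConjugate Matrix

section AdjointEquation

variable {𝕜 E F : Type*} [RCLike 𝕜] [NormedAddCommGroup E] [NormedAddCommGroup F]

theorem iInf_norm_sphere_mul_norm_le [NormedSpace 𝕜 E] [NormedSpace 𝕜 F] (A : E →ₗ[𝕜] F)
    (u : E) : (⨅ v : {v : E // ‖v‖ = 1}, ‖A v‖) * ‖u‖ ≤ ‖A u‖ := by
  rcases eq_or_ne u 0 with rfl | hu
  · simp
  have hnorm : ‖((‖u‖⁻¹ : ℝ) : 𝕜) • u‖ = 1 := by
    rw [norm_smul, RCLike.norm_ofReal, abs_inv, abs_norm, inv_mul_cancel₀ (norm_ne_zero_iff.2 hu)]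
  have hle := ciInf_le (f := fun v : {v : E // ‖v‖ = 1} => ‖A v‖)
    ⟨0, Set.forall_mem_range.2 fun v => norm_nonneg _⟩ ⟨_, hnorm⟩
  rw [map_smul, norm_smul, RCLike.norm_ofReal, abs_inv, abs_norm] at hle
  calc _ ≤ ‖u‖⁻¹ * ‖A u‖ * ‖u‖ := by gcongr
    _ = ‖A u‖ := by field_simp

variable [InnerProductSpace 𝕜 E] [InnerProductSpace 𝕜 F] [FiniteDimensional 𝕜 E]
  [FiniteDimensional 𝕜 F]

/-- Solving `A† c = w` with `c = A v` the least-norm solution: `A† A` is invertible, and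
`‖A v‖² = ⟪v, w⟫ ≤ ‖v‖ ‖w‖ ≤ ‖A v‖ ‖w‖ / σ`. -/
theorem exists_adjoint_apply_eq_norm_le (A : E →ₗ[𝕜] F) {σ : ℝ} (hσ : 0 < σ)
    (hA : ∀ u, σ * ‖u‖ ≤ ‖A u‖) (w : E) :
    ∃ c, LinearMap.adjoint A c = w ∧ ‖c‖ ≤ ‖w‖ / σ := by
  have hinj : Function.Injective (LinearMap.adjoint A ∘ₗ A) := by
    rw [← LinearMap.ker_eq_bot, LinearMap.ker_eq_bot']
    intro v hv
    have hAv : A v = 0 := by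
      rw [← inner_self_eq_zero (𝕜 := 𝕜), ← LinearMap.adjoint_inner_right, ← LinearMap.comp_apply,
        hv, inner_zero_right]
    have := hA v
    rw [hAv, norm_zero] at this
    exact norm_le_zero_iff.1 (nonpos_of_mul_nonpos_right this hσ)
  obtain ⟨v, hv⟩ := LinearMap.injective_iff_surjective.1 hinj w
  refine ⟨A v, hv, ?_⟩
  have hsq : ‖A v‖ * ‖A v‖ ≤ ‖A v‖ * (‖w‖ / σ) :=
    calc ‖A v‖ * ‖A v‖ = RCLike.re (inner 𝕜 v (LinearMap.adjoint A (A v))) := by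
          rw [LinearMap.adjoint_inner_right, inner_self_eq_norm_mul_norm]
      _ ≤ ‖v‖ * ‖w‖ := by rw [← LinearMap.comp_apply, hv]; exact re_inner_le_norm v w
      _ ≤ ‖A v‖ / σ * ‖w‖ := by gcongr; rw [le_div_iff₀ hσ, mul_comm]; exact hA v
      _ = ‖A v‖ * (‖w‖ / σ) := by ring
  rcases (norm_nonneg (A v)).eq_or_lt with h0 | hpos
  · rw [← h0]; positivity
  · exact le_of_mul_le_mul_left hsq hpos

end AdjointEquation

theorem finite_setOf_intPt_mem {Ω : Set (Fin d → ℝ)} (hΩ : IsCompact Ω) :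
    {ω : Fin d → ℤ | intPt ω ∈ Ω}.Finite := by
  have hcoord (i : Fin d) : ((↑) ⁻¹' (Function.eval i '' Ω) : Set ℤ).Finite := by
    simpa using Filter.mem_cofinite.1 <|
      Int.tendsto_coe_cofinite (hΩ.image (continuous_apply i)).compl_mem_cocompact
  refine (Set.Finite.pi hcoord).subset fun ω hω i _ => ⟨intPt ω, hω, rfl⟩

def torusExp (n : Fin d → ℤ) (y : Fin d → ℝ) : ℂ :=
  Complex.exp ((2 * Real.pi * Complex.I) * (dotR (intPt n) y : ℝ))

theorem norm_torusExp (n : Fin d → ℤ) (y : Fin d → ℝ) : ‖torusExp n y‖ = 1 := by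
  rw [torusExp, show (2 * Real.pi * Complex.I) * ((dotR (intPt n) y : ℝ) : ℂ)
    = ((2 * Real.pi * dotR (intPt n) y : ℝ) : ℂ) * Complex.I by push_cast; ring,
    Complex.norm_exp_ofReal_mul_I]

theorem continuous_torusExp (n : Fin d → ℤ) : Continuous (torusExp n) := by
  unfold torusExp dotR
  fun_prop

theorem conj_torusExp (n : Fin d → ℤ) (y : Fin d → ℝ) :
    conj (torusExp n y) = Complex.exp (-(2 * Real.pi * Complex.I) * (dotR (intPt n) y : ℝ)) := by
  rw [torusExp, ← Complex.exp_conj]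
  simp [map_ofNat, neg_mul]

theorem torusExp_sub (m n : Fin d → ℤ) (y : Fin d → ℝ) :
    torusExp (m - n) y = torusExp m y * conj (torusExp n y) := by
  rw [conj_torusExp, torusExp, torusExp, ← Complex.exp_add]
  simp only [dotR, intPt, Pi.sub_apply, Int.cast_sub, sub_mul, Finset.sum_sub_distrib]
  push_cast
  ring_nf

theorem torusExp_eq_prod (n : Fin d → ℤ) (y : Fin d → ℝ) :
    torusExp n y = ∏ i, Complex.exp (2 * Real.pi * Complex.I * n i * y i) := by
  rw [torusExp, ← Complex.exp_sum, dotR, Complex.ofReal_sum, Finset.mul_sum]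
  simp only [intPt, Complex.ofReal_mul, Complex.ofReal_intCast]
  ring_nf

theorem integral_Ico_exp_int (m : ℤ) :
    ∫ t in Set.Ico (-(1:ℝ)/2) (1/2), Complex.exp (2 * Real.pi * Complex.I * m * t)
      = if m = 0 then 1 else 0 := by
  rw [MeasureTheory.integral_Ico_eq_integral_Ioc, ← intervalIntegral.integral_of_le (by norm_num)]
  split_ifs with hm
  · norm_num [hm]
  have hc : 2 * Real.pi * Complex.I * m ≠ 0 := by simp [Real.pi_ne_zero, Complex.I_ne_zero, hm]
  have hper : Complex.exp (2 * Real.pi * Complex.I * m * (1 / 2 : ℝ))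
      = Complex.exp (2 * Real.pi * Complex.I * m * (-1 / 2 : ℝ)) := by
    rw [← mul_one (Complex.exp (_ * (-1 / 2 : ℝ))), ← Complex.exp_int_mul_two_pi_mul_I m,
      ← Complex.exp_add]
    push_cast
    ring_nf
  rw [integral_exp_mul_complex hc, hper, sub_self, zero_div]

theorem integral_cube_torusExp (n : Fin d → ℤ) :
    ∫ y in cube d, torusExp n y = if n = 0 then 1 else 0 := by
  simp_rw [torusExp_eq_prod]
  rw [cube, volume_pi, Measure.restrict_pi_pi, integral_fintype_prod_eq_prod
    (fun i (t : ℝ) => Complex.exp (2 * Real.pi * Complex.I * n i * t))]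
  simp_rw [integral_Ico_exp_int]
  by_cases hn : n = 0
  · simp [hn]
  · obtain ⟨i, hi⟩ := Function.ne_iff.1 hn
    rw [if_neg hn]
    exact Finset.prod_eq_zero (Finset.mem_univ i) (if_neg hi)

theorem integrableOn_cube_torusExp (n : Fin d → ℤ) : IntegrableOn (torusExp n) (cube d) :=
  ((continuous_torusExp n).integrableOn_Icc (a := fun _ => -(1:ℝ)/2) (b := fun _ => 1/2)).mono_set
    (by rw [← Set.pi_univ_Icc]; exact Set.pi_mono fun _ _ => Set.Ico_subset_Icc_self)

def trigPoly (T : Finset (Fin d → ℤ)) (c : T → ℂ) (y : Fin d → ℝ) : ℂ :=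
  ∑ ω, c ω * torusExp ω y

theorem isTrigPoly_trigPoly {Ω : Set (Fin d → ℝ)} {T : Finset (Fin d → ℤ)}
    (hT : ∀ ω ∈ T, intPt ω ∈ Ω) (c : T → ℂ) : IsTrigPoly Ω (trigPoly T c) := by
  refine ⟨fun ω => if h : ω ∈ T then c ⟨ω, h⟩ else 0, T.finite_toSet.subset fun ω hω => ?_,
    fun ω hω => ?_, fun y => ?_⟩
  · by_contra h
    exact hω (dif_neg h)
  · by_cases h : ω ∈ T
    · exact hT ω h
    · exact absurd (dif_neg h) hω
  · rw [tsum_eq_sum (s := T) fun ω hω => by simp [hω], ← Finset.sum_coe_sort T]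
    exact Finset.sum_congr rfl fun ω _ => by simp [torusExp]

theorem integral_cube_norm_trigPoly_sq (T : Finset (Fin d → ℤ)) (c : T → ℂ) :
    ∫ y in cube d, ‖trigPoly T c y‖ ^ 2 = ∑ ω, ‖c ω‖ ^ 2 := by
  have hexpand (y : Fin d → ℝ) : ((‖trigPoly T c y‖ ^ 2 : ℝ) : ℂ)
      = ∑ ω, ∑ ω', c ω * conj (c ω') * torusExp ((ω : Fin d → ℤ) - (ω' : Fin d → ℤ)) y := by
    rw [Complex.ofReal_pow, ← Complex.mul_conj', trigPoly, map_sum, Finset.sum_mul_sum]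
    refine Finset.sum_congr rfl fun ω _ => Finset.sum_congr rfl fun ω' _ => ?_
    rw [torusExp_sub, map_mul]
    ring
  have hint (ω ω' : T) :
      Integrable (fun y => c ω * conj (c ω') * torusExp ((ω : Fin d → ℤ) - (ω' : Fin d → ℤ)) y) (volume.restrict (cube d)) :=
    (integrableOn_cube_torusExp _).const_mul _
  apply Complex.ofReal_injective
  calc ((∫ y in cube d, ‖trigPoly T c y‖ ^ 2 : ℝ) : ℂ)
      = ∑ ω, ∑ ω', c ω * conj (c ω') * ∫ y in cube d, torusExp ((ω : Fin d → ℤ) - (ω' : Fin d → ℤ)) y := by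
        rw [← integral_complex_ofReal]
        simp_rw [hexpand]
        rw [integral_finsetSum _ fun ω _ => integrable_finsetSum _ fun ω' _ => hint ω ω']
        refine Finset.sum_congr rfl fun ω _ => ?_
        rw [integral_finsetSum _ fun ω' _ => hint ω ω']
        simp_rw [integral_const_mul]
    _ = ∑ ω, c ω * conj (c ω) := by
        simp [integral_cube_torusExp, sub_eq_zero]
    _ = _ := by simp [Complex.mul_conj']

theorem torusL2_trigPoly (T : Finset (Fin d → ℤ)) (c : EuclideanSpace ℂ T) :
    torusL2 (trigPoly T c) = ‖c‖ := by
  rw [torusL2, integral_cube_norm_trigPoly_sq, EuclideanSpace.norm_eq]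

theorem norm_trigPoly_le (T : Finset (Fin d → ℤ)) (c : EuclideanSpace ℂ T) (y : Fin d → ℝ) :
    ‖trigPoly T c y‖ ≤ √(#T : ℝ) * ‖c‖ := by
  let e : EuclideanSpace ℂ T := WithLp.toLp 2 fun ω => conj (torusExp ω y)
  have hinner : trigPoly T c y = inner ℂ e c := by
    simp [e, trigPoly, PiLp.inner_apply, mul_comm]
  have hnorm : ‖e‖ = √(#T : ℝ) := by
    simp [e, EuclideanSpace.norm_eq, norm_torusExp]
  rw [hinner, ← hnorm]
  exact norm_inner_le_norm _ _

/-- `Φ_{Ω,X}` for `T = Ω ∩ ℤ^d`. -/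
def fourierMatrix {κ : Type*} (T : Finset (Fin d → ℤ)) (x : κ → Fin d → ℝ) : Matrix T κ ℂ :=
  Matrix.of fun ω k => Complex.exp (-(2 * Real.pi * Complex.I) * (dotR (intPt ω) (x k) : ℝ))

theorem fourierMatrix_mulVec (T : Finset (Fin d → ℤ)) (x : ι → Fin d → ℝ) (u : ι → ℂ) (ω : T) :
    (fourierMatrix T x *ᵥ u) ω = Fop x u (intPt ω) := by
  simp [fourierMatrix, Matrix.mulVec, dotProduct, Fop, mul_comm]

theorem adjoint_toEuclideanLin_fourierMatrix_apply (T : Finset (Fin d → ℤ))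
    (x : ι → Fin d → ℝ) (c : EuclideanSpace ℂ T) (k : ι) :
    LinearMap.adjoint (fourierMatrix T x).toEuclideanLin c k = trigPoly T c (x k) := by
  rw [← Matrix.toEuclideanLin_conjTranspose_eq_adjoint]
  simp only [Matrix.toLpLin_apply, Matrix.mulVec, dotProduct, Matrix.conjTranspose_apply,
    fourierMatrix, Matrix.of_apply, Complex.star_def, ← conj_torusExp, Complex.conj_conj, trigPoly]
  exact Finset.sum_congr rfl fun _ _ => mul_comm _ _

theorem PhiSq_eq_sum {Ω : Set (Fin d → ℝ)} {T : Finset (Fin d → ℤ)}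
    (hT : ∀ ω, ω ∈ T ↔ intPt ω ∈ Ω) (x : ι → Fin d → ℝ) (u : ι → ℂ) :
    PhiSq Ω x u = ∑ ω : T, ‖Fop x u (intPt ω)‖ ^ 2 := by
  rw [PhiSq, tsum_eq_sum (s := T) fun ω hω => if_neg ((hT ω).not.1 hω), ← Finset.sum_coe_sort T]
  exact Finset.sum_congr rfl fun ω _ => if_pos ((hT ω).1 ω.2)

theorem PhiNorm_eq_norm_toEuclideanLin {Ω : Set (Fin d → ℝ)} {T : Finset (Fin d → ℤ)}
    (hT : ∀ ω, ω ∈ T ↔ intPt ω ∈ Ω) (x : ι → Fin d → ℝ) (u : ι → ℂ) :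
    PhiNorm Ω x u = ‖(fourierMatrix T x).toEuclideanLin (WithLp.toLp 2 u)‖ := by
  simp [PhiNorm, PhiSq_eq_sum hT, EuclideanSpace.norm_eq, fourierMatrix_mulVec]

theorem l2norm_eq_norm (u : ι → ℂ) : l2norm u = ‖(WithLp.toLp 2 u : EuclideanSpace ℂ ι)‖ := by
  rw [EuclideanSpace.norm_eq]
  rfl

theorem sigmaMinPhi_mul_norm_le {Ω : Set (Fin d → ℝ)} {T : Finset (Fin d → ℤ)}
    (hT : ∀ ω, ω ∈ T ↔ intPt ω ∈ Ω) (x : ι → Fin d → ℝ) (v : EuclideanSpace ℂ ι) :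
    sigmaMinPhi Ω x * ‖v‖ ≤ ‖(fourierMatrix T x).toEuclideanLin v‖ := by
  have hsigma : sigmaMinPhi Ω x
      = ⨅ v : {v : EuclideanSpace ℂ ι // ‖v‖ = 1}, ‖(fourierMatrix T x).toEuclideanLin v‖ :=
    Equiv.iInf_congr ((WithLp.equiv 2 (ι → ℂ)).symm.subtypeEquiv fun u => by
      rw [l2norm_eq_norm]; rfl) fun u => (PhiNorm_eq_norm_toEuclideanLin hT x u).symm
  rw [hsigma]
  exact iInf_norm_sphere_mul_norm_le _ v

theorem statement8_general (d : ℕ)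
    (Ω : Set (Fin d → ℝ)) (hΩ : IsCompact Ω)
    (s : ℕ) (x : Fin s → Fin d → ℝ)
    (hσ : 0 < sigmaMinPhi Ω x) :
    ∀ w : Fin s → ℂ, ∃ f : (Fin d → ℝ) → ℂ, IsTrigPoly Ω f ∧
      (∀ k, f (x k) = w k) ∧
      torusL2 f ≤ l2norm w / sigmaMinPhi Ω x ∧
      ∀ y, ‖f y‖ ≤ Real.sqrt (intCard Ω) * l2norm w / sigmaMinPhi Ω x := by
  intro w
  have hfin := finite_setOf_intPt_mem hΩ
  set T := hfin.toFinset
  have hT (ω : Fin d → ℤ) : ω ∈ T ↔ intPt ω ∈ Ω := hfin.mem_toFinset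
  obtain ⟨c, hcw, hc⟩ := exists_adjoint_apply_eq_norm_le _ hσ (sigmaMinPhi_mul_norm_le hT x)
    (WithLp.toLp 2 w)
  have hcard : (#T : ℝ) = intCard Ω := by rw [intCard, Set.ncard_eq_toFinset_card _ hfin]
  refine ⟨trigPoly T c, isTrigPoly_trigPoly (fun ω => (hT ω).1) c, fun k => ?_, ?_, fun y => ?_⟩
  · rw [← adjoint_toEuclideanLin_fourierMatrix_apply, hcw]
  · rw [torusL2_trigPoly, l2norm_eq_norm]
    exact hc
  · calc ‖trigPoly T c y‖ ≤ √(#T : ℝ) * ‖c‖ := norm_trigPoly_le T c y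
      _ ≤ √(intCard Ω) * (l2norm w / sigmaMinPhi Ω x) := by rw [hcard, l2norm_eq_norm]; gcongr
      _ = _ := by rw [mul_div_assoc]

/-- existence of norm-controlled interpolating trigonometric polynomials. -/
theorem statement8 (d : ℕ) (hd : 1 ≤ d)
    (Ω : Set (Fin d → ℝ)) (hΩ : IsCompact Ω)
    (s : ℕ) (x : Fin s → Fin d → ℝ)
    (hxinj : Function.Injective x) (hxcube : ∀ k, x k ∈ cube d)
    (hσ : 0 < sigmaMinPhi Ω x) :
    ∀ w : Fin s → ℂ, ∃ f : (Fin d → ℝ) → ℂ, IsTrigPoly Ω f ∧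
      (∀ k, f (x k) = w k) ∧
      torusL2 f ≤ l2norm w / sigmaMinPhi Ω x ∧
      ∀ y, ‖f y‖ ≤ Real.sqrt (intCard Ω) * l2norm w / sigmaMinPhi Ω x :=
  statement8_general d Ω hΩ s x hσ

end NF
end
end

section
/- Let d ≥ 1 be an integer, τ > 0, p ∈ [1,∞], and let X ⊆ [-1/2,1/2)^d be a finite nonempty set; set ν := ν_p(τ,X), computed with the torus ℓ^p metric. Then there exist nonempty pairwise disjoint subsets X_1, X_2, …, X_ν of X whose union is X and such that Δ_p(X_k) > τ for each k = 1,…,ν (where Δ_p of a one-element set is interpreted as +∞). -/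
/-!
Join two points of `X` by an edge when their torus distance is at most `τ`. Since `ν` counts a
point together with its neighbours, every point has fewer than `ν` neighbours, so a greedy
colouring with `ν` colours extends any proper partial colouring. Starting from a `ν`-element
subset of `X` coloured injectively, every colour is used, and the colour classes are nonempty
`τ`-separated sets partitioning `X`.
-/

open MeasureTheory Finset
open scoped ENNReal Classical BigOperators

noncomputable section

namespace SimpleGraph

variable {V α : Type*} (G : SimpleGraph V)

def IsProperColoringOn (S : Finset V) (c : V → α) : Prop :=
  ∀ x ∈ S, ∀ y ∈ S, G.Adj x y → c x ≠ c y

variable {G}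

theorem isProperColoringOn_of_injOn {S : Finset V} {c : V → α} (hc : Set.InjOn c S) :
    G.IsProperColoringOn S c :=
  fun _ hx _ hy hxy hcxy => hxy.ne (hc hx hy hcxy)

/-- `a` may already lie in `S`: it is not its own neighbour, so recolouring it is harmless. -/
theorem IsProperColoringOn.exists_update_insert [DecidableEq V] [Fintype α] {S : Finset V}
    {c : V → α} {a : V}
    (hc : G.IsProperColoringOn S c) (ha : #(S.filter (G.Adj a)) < Fintype.card α) :
    ∃ m, G.IsProperColoringOn (insert a S) (Function.update c a m) := by
  obtain ⟨m, -, hm⟩ := Finset.exists_mem_notMem_of_card_lt_card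
    (s := (S.filter (G.Adj a)).image c) (t := Finset.univ) (Finset.card_image_le.trans_lt ha)
  have hm_ne : ∀ y ∈ S, G.Adj a y → c y ≠ m := fun y hy hay hcy =>
    hm (Finset.mem_image.mpr ⟨y, Finset.mem_filter.mpr ⟨hy, hay⟩, hcy⟩)
  refine ⟨m, fun x hx y hy hxy => ?_⟩
  rcases eq_or_ne x a with rfl | hxa
  · rw [Function.update_self, Function.update_of_ne hxy.ne.symm]
    exact (hm_ne y ((Finset.mem_insert.mp hy).resolve_left hxy.ne.symm) hxy).symm
  rcases eq_or_ne y a with rfl | hya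
  · rw [Function.update_self, Function.update_of_ne hxa]
    exact hm_ne x ((Finset.mem_insert.mp hx).resolve_left hxa) hxy.symm
  rw [Function.update_of_ne hxa, Function.update_of_ne hya]
  exact hc x ((Finset.mem_insert.mp hx).resolve_left hxa)
    y ((Finset.mem_insert.mp hy).resolve_left hya) hxy

theorem IsProperColoringOn.exists_extension [DecidableEq V] [Fintype α] {X Y : Finset V}
    {c : V → α}
    (hc : G.IsProperColoringOn Y c) (hYX : Y ⊆ X)
    (hdeg : ∀ x ∈ X, #(X.filter (G.Adj x)) < Fintype.card α) :
    ∃ c' : V → α, (∀ y ∈ Y, c' y = c y) ∧ G.IsProperColoringOn X c' := by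
  suffices ∀ S ⊆ X \ Y, ∃ c' : V → α,
      (∀ y ∈ Y, c' y = c y) ∧ G.IsProperColoringOn (Y ∪ S) c' by
    simpa [Finset.union_sdiff_of_subset hYX] using this (X \ Y) subset_rfl
  intro S
  induction S using Finset.induction_on with
  | empty => exact fun _ => ⟨c, fun _ _ => rfl, by simpa using hc⟩
  | @insert a S haS ih =>
    intro hsub
    obtain ⟨haX, haY⟩ := Finset.mem_sdiff.mp (hsub (Finset.mem_insert_self a S))
    have hS : S ⊆ X \ Y := (Finset.subset_insert a S).trans hsub
    obtain ⟨c', hc'Y, hc'⟩ := ih hS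
    have hdeg_a : #((Y ∪ S).filter (G.Adj a)) < Fintype.card α :=
      (Finset.card_le_card (Finset.filter_subset_filter _
        (Finset.union_subset hYX (hS.trans Finset.sdiff_subset)))).trans_lt (hdeg a haX)
    obtain ⟨m, hm⟩ := hc'.exists_update_insert hdeg_a
    refine ⟨Function.update c' a m, fun y hy => ?_, by simpa using hm⟩
    rw [Function.update_of_ne (ne_of_mem_of_not_mem hy haY), hc'Y y hy]

end SimpleGraph

namespace NF

variable {d : ℕ}

theorem lpnorm_nonneg (p : ℝ≥0∞) (x : Fin d → ℝ) : 0 ≤ lpnorm p x := by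
  unfold lpnorm
  split
  · exact Real.iSup_nonneg fun i => abs_nonneg _
  · exact Real.rpow_nonneg (Finset.sum_nonneg fun i _ => Real.rpow_nonneg (abs_nonneg _) _) _

/-- For `p = 0` the defining formula gives `(∑ i, |x i| ^ 0) ^ (1 / 0) = 1`. -/
theorem lpnorm_zero {p : ℝ≥0∞} (hp : p ≠ 0) : lpnorm p (0 : Fin d → ℝ) = 0 := by
  unfold lpnorm
  split
  · simp
  · have ht : p.toReal ≠ 0 := ENNReal.toReal_ne_zero.mpr ⟨hp, ‹_›⟩
    simp [Real.zero_rpow ht, Real.zero_rpow (inv_ne_zero ht)]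

theorem lpnorm_neg (p : ℝ≥0∞) (x : Fin d → ℝ) : lpnorm p (-x) = lpnorm p x := by
  simp [lpnorm]

theorem torusDist_comm (p : ℝ≥0∞) (x y : Fin d → ℝ) :
    torusDist p x y = torusDist p y x := by
  unfold torusDist
  rw [← (Equiv.neg (Fin d → ℤ)).iInf_comp]
  congr 1
  ext n
  rw [← lpnorm_neg]
  congr 1
  ext i
  simp only [Equiv.neg_apply, Pi.neg_apply, Int.cast_neg]
  ring

theorem torusDist_self {p : ℝ≥0∞} (hp : p ≠ 0) (x : Fin d → ℝ) :
    torusDist p x x = 0 := by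
  refine le_antisymm ?_ (le_ciInf fun n => lpnorm_nonneg p _)
  refine (ciInf_le ⟨0, ?_⟩ 0).trans_eq ?_
  · rintro r ⟨n, rfl⟩
    exact lpnorm_nonneg p _
  · convert lpnorm_zero (d := d) hp using 2
    ext i
    simp

def nbhdGraph (p : ℝ≥0∞) (τ : ℝ) : SimpleGraph (Fin d → ℝ) where
  Adj x y := x ≠ y ∧ torusDist p x y ≤ τ
  symm := ⟨fun x y h => ⟨h.1.symm, (torusDist_comm p y x).trans_le h.2⟩⟩
  loopless := ⟨fun _ h => h.1 rfl⟩

theorem nbhdGraph_adj {p : ℝ≥0∞} {τ : ℝ} {x y : Fin d → ℝ} :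
    (nbhdGraph p τ).Adj x y ↔ x ≠ y ∧ torusDist p x y ≤ τ :=
  Iff.rfl

theorem finsetSparsity_le_card (p : ℝ≥0∞) (τ : ℝ) (X : Finset (Fin d → ℝ)) :
    finsetSparsity p τ X ≤ #X :=
  Finset.sup_le fun _ _ => Finset.card_filter_le _ _

/-- `finsetSparsity` counts `x` itself, the graph does not. -/
theorem card_filter_nbhdGraph_adj_lt {p : ℝ≥0∞} (hp : p ≠ 0) {τ : ℝ} (hτ : 0 ≤ τ)
    {X : Finset (Fin d → ℝ)} {x : Fin d → ℝ} (hx : x ∈ X) :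
    #(X.filter ((nbhdGraph p τ).Adj x)) < finsetSparsity p τ X := by
  refine lt_of_lt_of_le (Finset.card_lt_card ?_)
    (Finset.le_sup (f := fun x => (X.filter fun y => torusDist p y x ≤ τ).card) hx)
  refine Finset.ssubset_iff.mpr
    ⟨x, fun h => (nbhdGraph_adj.mp (Finset.mem_filter.mp h).2).1 rfl, fun y hy => ?_⟩
  rcases Finset.mem_insert.mp hy with rfl | hy
  · exact Finset.mem_filter.mpr ⟨hx, (torusDist_self hp y).trans_le hτ⟩
  · obtain ⟨hyX, hxy⟩ := Finset.mem_filter.mp hy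
    exact Finset.mem_filter.mpr ⟨hyX, (torusDist_comm p y x).trans_le (nbhdGraph_adj.mp hxy).2⟩

theorem statement9_general (d : ℕ) (τ : ℝ) (hτ : 0 < τ)
    (p : ℝ≥0∞) (hp : 1 ≤ p)
    (X : Finset (Fin d → ℝ)) (hXne : X.Nonempty) :
    ∃ P : Fin (finsetSparsity p τ X) → Finset (Fin d → ℝ),
      (∀ k, (P k).Nonempty) ∧ (∀ k, P k ⊆ X) ∧
      (∀ k l, k ≠ l → Disjoint (P k) (P l)) ∧
      Finset.univ.biUnion P = X ∧
      ∀ k, ∀ x ∈ P k, ∀ y ∈ P k, x ≠ y → τ < torusDist p x y := by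
  set ν := finsetSparsity p τ X
  have hdeg : ∀ x ∈ X, #(X.filter ((nbhdGraph p τ).Adj x)) < ν :=
    fun _ hx => card_filter_nbhdGraph_adj_lt (one_pos.trans_le hp).ne' hτ.le hx
  obtain ⟨x₀, hx₀⟩ := hXne
  have : NeZero ν := NeZero.of_pos ((Nat.zero_le _).trans_lt (hdeg x₀ hx₀))
  obtain ⟨Y, hYX, hY⟩ := Finset.exists_subset_card_eq (finsetSparsity_le_card p τ X)
  let e := Y.equivFinOfCardEq hY
  let c₀ : (Fin d → ℝ) → Fin ν := fun x => if h : x ∈ Y then e ⟨x, h⟩ else 0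
  have hc₀ : Set.InjOn c₀ Y := fun x hx y hy hxy => by
    simp only [c₀, dif_pos (Finset.mem_coe.mp hx), dif_pos (Finset.mem_coe.mp hy)] at hxy
    exact congrArg Subtype.val (e.injective hxy)
  obtain ⟨c, hcY, hc⟩ :=
    (SimpleGraph.isProperColoringOn_of_injOn hc₀).exists_extension hYX (by simpa using hdeg)
  refine ⟨fun k => X.filter (c · = k), fun k => ⟨e.symm k, ?_⟩,
    fun _ => Finset.filter_subset _ _, fun k l hkl => ?_,
    Finset.biUnion_filter_eq_of_maps_to fun _ _ => Finset.mem_univ _, fun k x hx y hy hxy => ?_⟩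
  · simp [hYX (e.symm k).2, hcY _ (e.symm k).2, c₀]
  · exact Finset.disjoint_filter.mpr fun x _ hxk hxl => hkl (hxk.symm.trans hxl)
  · obtain ⟨hxX, rfl⟩ := Finset.mem_filter.mp hx
    obtain ⟨hyX, hyx⟩ := Finset.mem_filter.mp hy
    by_contra hle
    exact hc x hxX y hyX (nbhdGraph_adj.mpr ⟨hxy, not_lt.mp hle⟩) hyx.symm

/-- decomposition of a set into ν well-separated subsets. -/
theorem statement9 (d : ℕ) (hd : 1 ≤ d) (τ : ℝ) (hτ : 0 < τ)
    (p : ℝ≥0∞) (hp : 1 ≤ p)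
    (X : Finset (Fin d → ℝ)) (hXne : X.Nonempty) (hXc : ∀ x ∈ X, x ∈ cube d) :
    ∃ P : Fin (finsetSparsity p τ X) → Finset (Fin d → ℝ),
      (∀ k, (P k).Nonempty) ∧ (∀ k, P k ⊆ X) ∧
      (∀ k l, k ≠ l → Disjoint (P k) (P l)) ∧
      Finset.univ.biUnion P = X ∧
      ∀ k, ∀ x ∈ P k, ∀ y ∈ P k, x ≠ y → τ < torusDist p x y :=
  statement9_general d τ hτ p hp X hXne

end NF
end
end
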